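/- Define Ξ(μ) as the measure with distribution function Ξ(μ)([0,t]) = 1 + ψ_μ(-1/t). Then Ξ(μ ⊎ ν) = Ξ(μ) ∪∨ Ξ(ν) for all probability measures μ, ν on [0,∞), where ⊎ is boolean additive convolution (η_{μ⊎ν} = η_μ + η_ν) and ∪∨ is boolean max-convolution. Equivalently: 1/Ξ(μ⊎ν)([0,t]) = 1/Ξ(μ)([0,t]) + 1/Ξ(ν)([0,t]) − 1, i.e., 1/Ξ(μ)([0,t]) = 1 − η_μ(−1/t). -/

import Mathlib

open MeasureTheory Set

/-! For `s < 0` and `μ` supported on `[0, ∞)` one has `1 + ψ_μ(s) = ∫ 1 / (1 - s u) dμ(u) > 0`,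
so `1 / (1 + ψ) = 1 - ψ / (1 + ψ) = 1 - η` holds without division by zero. Additivity of `η`
then turns into the defining relation of boolean max-convolution for the reciprocals. -/

noncomputable def psiTransform (μ : Measure ℝ) (s : ℝ) : ℝ :=
  ∫ u, s * u / (1 - s * u) ∂μ

noncomputable def etaTransform (μ : Measure ℝ) (s : ℝ) : ℝ :=
  psiTransform μ s / (1 + psiTransform μ s)

lemma ae_nonneg_of_measure_Iio_eq_zero {μ : Measure ℝ} (hμ : μ (Iio 0) = 0) :
    ∀ᵐ u ∂μ, 0 ≤ u :=
  (measure_eq_zero_iff_ae_notMem.1 hμ).mono fun _ hu => not_lt.1 hu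

lemma integral_pos_of_ae_pos {α : Type*} [MeasurableSpace α] {μ : Measure α} [NeZero μ]
    {f : α → ℝ} (hfi : Integrable f μ) (hf : ∀ᵐ x ∂μ, 0 < f x) : 0 < ∫ x, f x ∂μ := by
  rw [integral_pos_iff_support_of_nonneg_ae (hf.mono fun _ hx => hx.le) hfi, pos_iff_ne_zero]
  intro h_null
  obtain ⟨x, hx_pos, hx_null⟩ := (hf.and (measure_eq_zero_iff_ae_notMem.1 h_null)).exists
  exact hx_null hx_pos.ne'

lemma one_le_one_sub_mul {s u : ℝ} (hs : s ≤ 0) (hu : 0 ≤ u) : 1 ≤ 1 - s * u := by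
  nlinarith

lemma integrable_psiTransform_integrand {μ : Measure ℝ} [IsFiniteMeasure μ]
    (hμ : ∀ᵐ u ∂μ, 0 ≤ u) {s : ℝ} (hs : s ≤ 0) :
    Integrable (fun u => s * u / (1 - s * u)) μ := by
  refine (integrable_const (1 : ℝ)).mono' (Measurable.aestronglyMeasurable (by fun_prop)) ?_
  filter_upwards [hμ] with u hu
  have hden := one_le_one_sub_mul hs hu
  rw [norm_div, Real.norm_of_nonpos (mul_nonpos_of_nonpos_of_nonneg hs hu),
    Real.norm_of_nonneg (by linarith : (0 : ℝ) ≤ 1 - s * u), div_le_one (by linarith)]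
  linarith

lemma one_add_psiTransform_pos {μ : Measure ℝ} [IsProbabilityMeasure μ]
    (hμ : ∀ᵐ u ∂μ, 0 ≤ u) {s : ℝ} (hs : s ≤ 0) : 0 < 1 + psiTransform μ s := by
  have h_int := (integrable_const (1 : ℝ)).add (integrable_psiTransform_integrand hμ hs)
  have h_eq : 1 + psiTransform μ s = ∫ u, (1 + s * u / (1 - s * u)) ∂μ := by
    rw [integral_add (integrable_const 1) (integrable_psiTransform_integrand hμ hs),
      integral_const, probReal_univ, one_smul, psiTransform]
  rw [h_eq]
  refine integral_pos_of_ae_pos h_int ?_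
  filter_upwards [hμ] with u hu
  have hden := one_le_one_sub_mul hs hu
  have h_resolvent : 1 + s * u / (1 - s * u) = 1 / (1 - s * u) := by
    field_simp
    ring
  rw [h_resolvent]
  positivity

lemma one_div_one_add_psiTransform {μ : Measure ℝ} [IsProbabilityMeasure μ]
    (hμ : ∀ᵐ u ∂μ, 0 ≤ u) {s : ℝ} (hs : s ≤ 0) :
    1 / (1 + psiTransform μ s) = 1 - etaTransform μ s := by
  have hpos := one_add_psiTransform_pos hμ hs
  rw [etaTransform]
  field_simp
  ring

/-- `Ξ` is a homomorphism from boolean additive convolution to boolean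
max-convolution: if `η_ρ = η_μ + η_ν` (i.e. `ρ = μ ⊎ ν`), then
`1/Ξ(ρ)([0,t]) = 1/Ξ(μ)([0,t]) + 1/Ξ(ν)([0,t]) - 1` for all `t > 0`; the key identity
being `1/Ξ(μ)([0,t]) = 1 - η_μ(-1/t)`. -/
theorem xi_boolean_hom (μ ν ρ : Measure ℝ)
    [IsProbabilityMeasure μ] [IsProbabilityMeasure ν] [IsProbabilityMeasure ρ]
    (hμ : μ (Set.Iio 0) = 0) (hν : ν (Set.Iio 0) = 0) (hρ : ρ (Set.Iio 0) = 0)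
    (heta : ∀ s : ℝ, s < 0 →
      (∫ u, s * u / (1 - s * u) ∂ρ) / (1 + ∫ u, s * u / (1 - s * u) ∂ρ) =
        (∫ u, s * u / (1 - s * u) ∂μ) / (1 + ∫ u, s * u / (1 - s * u) ∂μ) +
        (∫ u, s * u / (1 - s * u) ∂ν) / (1 + ∫ u, s * u / (1 - s * u) ∂ν)) :
    (∀ s : ℝ, s < 0 →
      1 / (1 + ∫ u, s * u / (1 - s * u) ∂μ) =
        1 - (∫ u, s * u / (1 - s * u) ∂μ) / (1 + ∫ u, s * u / (1 - s * u) ∂μ)) ∧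
    (∀ t : ℝ, 0 < t →
      1 / (1 + ∫ u, (-1 / t) * u / (1 - (-1 / t) * u) ∂ρ) =
        1 / (1 + ∫ u, (-1 / t) * u / (1 - (-1 / t) * u) ∂μ) +
        1 / (1 + ∫ u, (-1 / t) * u / (1 - (-1 / t) * u) ∂ν) - 1) := by
  have hμ₀ := ae_nonneg_of_measure_Iio_eq_zero hμ
  have hν₀ := ae_nonneg_of_measure_Iio_eq_zero hν
  have hρ₀ := ae_nonneg_of_measure_Iio_eq_zero hρ
  refine ⟨fun s hs => one_div_one_add_psiTransform hμ₀ hs.le, fun t ht => ?_⟩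
  have hs : -1 / t < 0 := div_neg_of_neg_of_pos (by norm_num) ht
  have h_add : etaTransform ρ (-1 / t) = etaTransform μ (-1 / t) + etaTransform ν (-1 / t) :=
    heta _ hs
  change 1 / (1 + psiTransform ρ _) = 1 / (1 + psiTransform μ _) + 1 / (1 + psiTransform ν _) - 1
  rw [one_div_one_add_psiTransform hρ₀ hs.le, one_div_one_add_psiTransform hμ₀ hs.le,
    one_div_one_add_psiTransform hν₀ hs.le, h_add]
  ring
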